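/- For the root systems A₂ and G₂ (both with hexagonal coroot lattice), the optimal discrete spectral measure supported on the vertices and edge-midpoints of the (rescaled) hexagonal Voronoi cell gives F(2r) = min over the Chebyshev image of 2z₁² − (2/3)z₁ − 1/3 = −7/18 for every r ∈ N, hence the spectral lower bound 1 − 1/F(2r) = 25/7 for χ_m(R², ∂Vor(Λ)), independent of r. -/

import Mathlib

noncomputable section
open scoped BigOperators

abbrev EV (n : ℕ) := EuclideanSpace ℝ (Fin n)

/-- The Weyl group `S₃` of `A₂` acting on `ℝ³` by permuting coordinates. -/
def permAct (p : Equiv.Perm (Fin 3)) (μ : EV 3) : EV 3 := WithLp.toLp 2 (fun j => μ (p j))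

/-- The generalized cosine for `A₂` (Weyl group `S₃`). -/
def a2Gencos (μ u : EV 3) : ℂ :=
  ((Fintype.card (Equiv.Perm (Fin 3)) : ℂ))⁻¹ *
    ∑ p : Equiv.Perm (Fin 3),
      Complex.exp (-(2 * Real.pi * Complex.I) * ((inner ℝ (permAct p μ) u : ℝ) : ℂ))

/-- The Weyl group `S₃ × {±1}` of `G₂` acting on `ℝ³`. -/
def g2Act (g : Equiv.Perm (Fin 3) × Bool) (μ : EV 3) : EV 3 :=
  WithLp.toLp 2 (fun j => (if g.2 then (1 : ℝ) else -1) * μ (g.1 j))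

/-- The generalized cosine for `G₂` (Weyl group `S₃ × {±1}`). -/
def g2Gencos (μ u : EV 3) : ℂ :=
  ((Fintype.card (Equiv.Perm (Fin 3) × Bool) : ℂ))⁻¹ *
    ∑ g : Equiv.Perm (Fin 3) × Bool,
      Complex.exp (-(2 * Real.pi * Complex.I) * ((inner ℝ (g2Act g μ) u : ℝ) : ℂ))

def a2ϖ₁ : EV 3 := WithLp.toLp 2 (fun j => ![2 / 3, -(1 / 3), -(1 / 3)] j)
def a2ϖ₂ : EV 3 := WithLp.toLp 2 (fun j => ![1 / 3, 1 / 3, -(2 / 3)] j)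
def g2ϖ₁ : EV 3 := WithLp.toLp 2 (fun j => ![0, -1, 1] j)
def g2ϖ₂ : EV 3 := WithLp.toLp 2 (fun j => ![-1, -1, 2] j)

/-- The `A₂` spectral combination `(2/3)·Θ_{rϖ₁+rϖ₂} + (1/6)·(Θ_{2rϖ₁} + Θ_{2rϖ₂})`. -/
def a2Expr (r : ℕ) (u : EV 3) : ℂ :=
  (2 / 3) * a2Gencos ((r : ℝ) • (a2ϖ₁ + a2ϖ₂)) u
    + (1 / 6) * (a2Gencos ((2 * r : ℝ) • a2ϖ₁) u + a2Gencos ((2 * r : ℝ) • a2ϖ₂) u)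

/-- The `G₂` spectral combination `(2/3)·Θ_{rϖ₂} + (1/3)·Θ_{2rϖ₁}`. -/
def g2Expr (r : ℕ) (u : EV 3) : ℂ :=
  (2 / 3) * g2Gencos ((r : ℝ) • g2ϖ₂) u + (1 / 3) * g2Gencos ((2 * r : ℝ) • g2ϖ₁) u

/-!
Generalized cosines obey the product rule `Θ_μ Θ_ν = |W|⁻¹ ∑_w Θ_{μ + wν}` and are constant on
Weyl orbits. For `A₂` this gives `Θ_{2ϖ₁} = 3Θ₁² − 2Θ₂` and `Θ_{ϖ₁+ϖ₂} = (3Θ₁Θ₂ − 1)/2` with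
`Θ₂ = conj Θ₁`; for `G₂` it gives `Θ_{2ϖ₁} = 6Θ₁² − 1 − 2Θ₁ − 2Θ₂` with `Θ₁` real. Substituting,
both combinations become `2z² − (2/3)z − 1/3` in `z = Re Θ₁`. This parabola has its minimum
`−7/18` at `z = 1/6`, which is attained: on the line `t(1, −1, 0)` (resp. `t e₃`) one has
`Θ₁ = (1 + 2 cos 2πt)/3`.
-/

open ComplexConjugate

def genCos {G E : Type*} [Fintype G] [NormedAddCommGroup E] [InnerProductSpace ℝ E]
    (act : G → E → E) (μ u : E) : ℂ :=
  ((Fintype.card G : ℂ))⁻¹ *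
    ∑ g : G, Complex.exp (-(2 * Real.pi * Complex.I) * ((inner ℝ (act g μ) u : ℝ) : ℂ))

/-- A linear action of a finite group, stated without a group structure on the index type (the
Weyl group of `G₂` is indexed by `Perm (Fin 3) × Bool`): composing with a member on either side
reindexes the family bijectively. -/
structure IsLinearOrbitAction {G E : Type*} [NormedAddCommGroup E] [InnerProductSpace ℝ E]
    (act : G → E → E) : Prop where
  isLinearMap : ∀ g, IsLinearMap ℝ (act g)
  exists_equiv_comp_left : ∀ g, ∃ σ : G ≃ G, ∀ h μ, act h (act g μ) = act (σ h) μ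
  exists_equiv_comp_right : ∀ g, ∃ σ : G ≃ G, ∀ h μ, act g (act h μ) = act (σ h) μ

section genCos

variable {G E : Type*} [Fintype G] [NormedAddCommGroup E] [InnerProductSpace ℝ E]
  {act : G → E → E}

theorem genCos_smul_left (hact : IsLinearOrbitAction act) (c : ℝ) (μ u : E) :
    genCos act (c • μ) u = genCos act μ (c • u) := by
  simp only [genCos, (hact.isLinearMap _).map_smul, real_inner_smul_left, real_inner_smul_right]

theorem genCos_act_left (hact : IsLinearOrbitAction act) (g : G) (μ u : E) :
    genCos act (act g μ) u = genCos act μ u := by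
  obtain ⟨σ, hσ⟩ := hact.exists_equiv_comp_left g
  simp only [genCos, hσ, σ.sum_comp (fun h => Complex.exp (-(2 * Real.pi * Complex.I) *
    ((inner ℝ (act h μ) u : ℝ) : ℂ)))]

theorem genCos_zero_left [Nonempty G] (hact : IsLinearOrbitAction act) (u : E) :
    genCos act 0 u = 1 := by
  simp [genCos, (hact.isLinearMap _).map_zero]

theorem conj_genCos (hact : IsLinearOrbitAction act) (μ u : E) :
    conj (genCos act μ u) = genCos act (-μ) u := by
  simp [genCos, (hact.isLinearMap _).map_neg, map_sum, ← Complex.exp_conj, map_ofNat]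

theorem genCos_mul_genCos (hact : IsLinearOrbitAction act) (μ ν u : E) :
    genCos act μ u * genCos act ν u =
      (Fintype.card G : ℂ)⁻¹ * ∑ h : G, genCos act (μ + act h ν) u := by
  have hreindex : ∀ g, ∑ h : G, Complex.exp (-(2 * Real.pi * Complex.I) *
      ((inner ℝ (act g (act h ν)) u : ℝ) : ℂ)) = ∑ h : G, Complex.exp (-(2 * Real.pi * Complex.I) *
      ((inner ℝ (act h ν) u : ℝ) : ℂ)) := fun g => by
    obtain ⟨σ, hσ⟩ := hact.exists_equiv_comp_right g
    simp only [hσ, σ.sum_comp (fun h => Complex.exp (-(2 * Real.pi * Complex.I) *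
      ((inner ℝ (act h ν) u : ℝ) : ℂ)))]
  simp only [genCos, (hact.isLinearMap _).map_add, inner_add_left, Complex.ofReal_add, mul_add,
    Complex.exp_add, ← Finset.mul_sum]
  rw [Finset.sum_comm]
  simp only [← Finset.mul_sum, hreindex]
  rw [← Finset.sum_mul]
  ring

end genCos

theorem Equiv.Perm.sum_fin_three {M : Type*} [AddCommMonoid M] (f : Equiv.Perm (Fin 3) → M) :
    ∑ p, f p = f 1 + f (Equiv.swap 0 1) + f (Equiv.swap 0 2) + f (Equiv.swap 1 2)
      + f (Equiv.swap 0 1 * Equiv.swap 1 2) + f (Equiv.swap 1 2 * Equiv.swap 0 1) := by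
  rw [show (Finset.univ : Finset (Equiv.Perm (Fin 3))) =
    {1, Equiv.swap 0 1, Equiv.swap 0 2, Equiv.swap 1 2,
     Equiv.swap 0 1 * Equiv.swap 1 2, Equiv.swap 1 2 * Equiv.swap 0 1} by decide]
  rw [Finset.sum_insert (by decide), Finset.sum_insert (by decide), Finset.sum_insert (by decide),
    Finset.sum_insert (by decide), Finset.sum_insert (by decide), Finset.sum_singleton]
  abel

theorem exists_cos_two_pi_mul_eq_neg_one_fourth :
    ∃ t : ℝ, Real.cos (2 * Real.pi * t) = -(1 / 4) :=
  ⟨Real.arccos (-(1 / 4)) / (2 * Real.pi), by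
    rw [mul_div_cancel₀ _ (by positivity)]
    exact Real.cos_arccos (by norm_num) (by norm_num)⟩

theorem isLeast_quadratic_image {α : Type*} (F : α → ℂ) (z : α → ℝ)
    (hF : ∀ a, F a = ((2 * z a ^ 2 - (2 / 3) * z a - 1 / 3 : ℝ) : ℂ)) (hz : ∃ a, z a = 1 / 6) :
    IsLeast {x : ℝ | ∃ a, F a = (x : ℂ)} (-(7 / 18)) := by
  obtain ⟨a, ha⟩ := hz
  refine ⟨⟨a, by rw [hF, ha]; norm_num⟩, ?_⟩
  rintro x ⟨b, hb⟩
  rw [hF, Complex.ofReal_inj] at hb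
  nlinarith [sq_nonneg (z b - 1 / 6)]

section A₂

open Equiv

theorem a2Gencos_eq_genCos : a2Gencos = genCos permAct := rfl

theorem isLinearOrbitAction_permAct : IsLinearOrbitAction permAct where
  isLinearMap p := ⟨fun μ ν => by ext; simp [permAct], fun c μ => by ext; simp [permAct]⟩
  exists_equiv_comp_left p := ⟨Equiv.mulLeft p, fun q μ => by ext; simp [permAct]⟩
  exists_equiv_comp_right p := ⟨Equiv.mulRight p, fun q μ => by ext; simp [permAct]⟩

theorem a2Gencos_mul_self (v : EV 3) :
    a2Gencos a2ϖ₁ v * a2Gencos a2ϖ₁ v =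
      (1 / 3) * a2Gencos ((2 : ℝ) • a2ϖ₁) v + (2 / 3) * a2Gencos a2ϖ₂ v := by
  have e₁ : a2ϖ₁ + permAct 1 a2ϖ₁ = (2 : ℝ) • a2ϖ₁ := by
    ext j; fin_cases j <;> simp [permAct, a2ϖ₁] <;> norm_num
  have e₂ : a2ϖ₁ + permAct (swap 0 1) a2ϖ₁ = a2ϖ₂ := by
    ext j; fin_cases j <;> simp [permAct, a2ϖ₁, a2ϖ₂, swap_apply_def] <;> norm_num
  have e₃ : a2ϖ₁ + permAct (swap 0 2) a2ϖ₁ = permAct (swap 1 2) a2ϖ₂ := by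
    ext j; fin_cases j <;> simp [permAct, a2ϖ₁, a2ϖ₂, swap_apply_def] <;> norm_num
  have e₄ : a2ϖ₁ + permAct (swap 1 2) a2ϖ₁ = (2 : ℝ) • a2ϖ₁ := by
    ext j; fin_cases j <;> simp [permAct, a2ϖ₁, swap_apply_def] <;> norm_num
  have e₅ : a2ϖ₁ + permAct (swap 0 1 * swap 1 2) a2ϖ₁ = permAct (swap 1 2) a2ϖ₂ := by
    ext j; fin_cases j <;> simp [permAct, a2ϖ₁, a2ϖ₂, swap_apply_def] <;> norm_num
  have e₆ : a2ϖ₁ + permAct (swap 1 2 * swap 0 1) a2ϖ₁ = a2ϖ₂ := by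
    ext j; fin_cases j <;> simp [permAct, a2ϖ₁, a2ϖ₂, swap_apply_def] <;> norm_num
  rw [a2Gencos_eq_genCos, genCos_mul_genCos isLinearOrbitAction_permAct, Perm.sum_fin_three,
    e₁, e₂, e₃, e₄, e₅, e₆, genCos_act_left isLinearOrbitAction_permAct]
  simp only [Fintype.card_perm, Fintype.card_fin, one_div]
  ring

theorem a2Gencos_mul_a2Gencos (v : EV 3) :
    a2Gencos a2ϖ₁ v * a2Gencos a2ϖ₂ v = (1 / 3) + (2 / 3) * a2Gencos (a2ϖ₁ + a2ϖ₂) v := by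
  have e₂ : a2ϖ₁ + permAct (swap 0 1) a2ϖ₂ = a2ϖ₁ + a2ϖ₂ := by
    ext j; fin_cases j <;> simp [permAct, a2ϖ₂, swap_apply_def]
  have e₃ : a2ϖ₁ + permAct (swap 0 2) a2ϖ₂ = 0 := by
    ext j; fin_cases j <;> simp [permAct, a2ϖ₁, a2ϖ₂, swap_apply_def]
  have e₄ : a2ϖ₁ + permAct (swap 1 2) a2ϖ₂ = permAct (swap 1 2) (a2ϖ₁ + a2ϖ₂) := by
    ext j; fin_cases j <;> simp [permAct, a2ϖ₁, a2ϖ₂, swap_apply_def]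
  have e₅ : a2ϖ₁ + permAct (swap 0 1 * swap 1 2) a2ϖ₂ = permAct (swap 1 2) (a2ϖ₁ + a2ϖ₂) := by
    ext j; fin_cases j <;> simp [permAct, a2ϖ₁, a2ϖ₂, swap_apply_def]
  have e₆ : a2ϖ₁ + permAct (swap 1 2 * swap 0 1) a2ϖ₂ = 0 := by
    ext j; fin_cases j <;> simp [permAct, a2ϖ₁, a2ϖ₂, swap_apply_def]
  rw [a2Gencos_eq_genCos, genCos_mul_genCos isLinearOrbitAction_permAct, Perm.sum_fin_three,
    show a2ϖ₁ + permAct 1 a2ϖ₂ = a2ϖ₁ + a2ϖ₂ from rfl, e₂, e₃, e₄, e₅, e₆,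
    genCos_act_left isLinearOrbitAction_permAct, genCos_zero_left isLinearOrbitAction_permAct]
  simp only [Fintype.card_perm, Fintype.card_fin, one_div]
  ring

theorem conj_a2Gencos (c : ℝ) (v : EV 3) :
    conj (a2Gencos (c • a2ϖ₁) v) = a2Gencos (c • a2ϖ₂) v := by
  have h : -a2ϖ₁ = permAct (swap 0 2) a2ϖ₂ := by
    ext j; fin_cases j <;> simp [permAct, a2ϖ₁, a2ϖ₂, swap_apply_def]
  rw [a2Gencos_eq_genCos, conj_genCos isLinearOrbitAction_permAct, ← smul_neg, h,
    ← (isLinearOrbitAction_permAct.isLinearMap _).map_smul,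
    genCos_act_left isLinearOrbitAction_permAct]

theorem a2Expr_eq_a2Expr_one (r : ℕ) (u : EV 3) : a2Expr r u = a2Expr 1 ((r : ℝ) • u) := by
  simp only [a2Expr, a2Gencos_eq_genCos, ← genCos_smul_left isLinearOrbitAction_permAct,
    smul_smul, Nat.cast_one, mul_one, one_smul, mul_comm (r : ℝ) 2]

theorem a2Expr_one (v : EV 3) :
    a2Expr 1 v =
      ((2 * (a2Gencos a2ϖ₁ v).re ^ 2 - (2 / 3) * (a2Gencos a2ϖ₁ v).re - 1 / 3 : ℝ) : ℂ) := by
  have hconj : conj (a2Gencos a2ϖ₁ v) = a2Gencos a2ϖ₂ v := by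
    simpa using conj_a2Gencos 1 v
  have hconj' : conj (a2Gencos a2ϖ₂ v) = a2Gencos a2ϖ₁ v := by
    rw [← hconj, Complex.conj_conj]
  have h₁₁ := a2Gencos_mul_a2Gencos v
  have h₂₀ := a2Gencos_mul_self v
  have h₀₂ := congrArg conj h₂₀
  simp only [map_add, map_mul, conj_a2Gencos, map_div₀, map_one, map_ofNat, hconj, hconj'] at h₀₂
  simp only [a2Expr, Nat.cast_one, mul_one, one_smul]
  push_cast
  rw [Complex.re_eq_add_conj, hconj]
  linear_combination -h₁₁ - h₂₀ / 2 - h₀₂ / 2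

theorem a2Gencos_line (t : ℝ) :
    a2Gencos a2ϖ₁ (WithLp.toLp 2 ![t, -t, 0]) =
      (((1 + 2 * Real.cos (2 * Real.pi * t)) / 3 : ℝ) : ℂ) := by
  unfold a2Gencos
  rw [Perm.sum_fin_three]
  simp [permAct, a2ϖ₁, PiLp.inner_apply, Fin.sum_univ_three, swap_apply_of_ne_of_ne,
    Fintype.card_perm]
  have h := Complex.two_cos (2 * Real.pi * t)
  ring_nf at h ⊢
  linear_combination -h / 3

end A₂

section G₂

open Equiv

theorem g2Gencos_eq_genCos : g2Gencos = genCos g2Act := rfl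

theorem isLinearOrbitAction_g2Act : IsLinearOrbitAction g2Act where
  isLinearMap g := ⟨fun μ ν => by ext; simp [g2Act, mul_add], fun c μ => by ext; simp [g2Act]⟩
  exists_equiv_comp_left g := by
    obtain ⟨p, _ | _⟩ := g
    · exact ⟨(Equiv.mulLeft p).prodCongr Equiv.boolNot, fun ⟨q, c⟩ μ => by
        cases c <;> ext <;> simp [g2Act]⟩
    · exact ⟨(Equiv.mulLeft p).prodCongr (Equiv.refl _), fun ⟨q, c⟩ μ => by
        ext; simp [g2Act]⟩
  exists_equiv_comp_right g := by
    obtain ⟨p, _ | _⟩ := g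
    · exact ⟨(Equiv.mulRight p).prodCongr Equiv.boolNot, fun ⟨q, c⟩ μ => by
        cases c <;> ext <;> simp [g2Act]⟩
    · exact ⟨(Equiv.mulRight p).prodCongr (Equiv.refl _), fun ⟨q, c⟩ μ => by
        ext; simp [g2Act]⟩

theorem g2Gencos_mul_self (v : EV 3) :
    g2Gencos g2ϖ₁ v * g2Gencos g2ϖ₁ v =
      (1 / 6) * (g2Gencos ((2 : ℝ) • g2ϖ₁) v + 1 + 2 * g2Gencos g2ϖ₁ v + 2 * g2Gencos g2ϖ₂ v) := by
  have e₁ : g2ϖ₁ + g2Act (1, true) g2ϖ₁ = (2 : ℝ) • g2ϖ₁ := by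
    ext j; fin_cases j <;> simp [g2Act, g2ϖ₁] <;> norm_num
  have e₂ : g2ϖ₁ + g2Act (swap 0 1, true) g2ϖ₁ = g2ϖ₂ := by
    ext j; fin_cases j <;> simp [g2Act, g2ϖ₁, g2ϖ₂, swap_apply_def]
    norm_num
  have e₃ : g2ϖ₁ + g2Act (swap 0 2, true) g2ϖ₁ = g2Act (swap 1 2, false) g2ϖ₂ := by
    ext j; fin_cases j <;> simp [g2Act, g2ϖ₁, g2ϖ₂, swap_apply_def]
    norm_num
  have e₄ : g2ϖ₁ + g2Act (swap 1 2, true) g2ϖ₁ = 0 := by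
    ext j; fin_cases j <;> simp [g2Act, g2ϖ₁, swap_apply_def]
  have e₅ : g2ϖ₁ + g2Act (swap 0 1 * swap 1 2, true) g2ϖ₁ = g2Act (swap 0 1, true) g2ϖ₁ := by
    ext j; fin_cases j <;> simp [g2Act, g2ϖ₁, swap_apply_def]
  have e₆ : g2ϖ₁ + g2Act (swap 1 2 * swap 0 1, true) g2ϖ₁ = g2Act (swap 0 2, true) g2ϖ₁ := by
    ext j; fin_cases j <;> simp [g2Act, g2ϖ₁, swap_apply_def]
  have f₁ : g2ϖ₁ + g2Act (1, false) g2ϖ₁ = 0 := by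
    ext j; fin_cases j <;> simp [g2Act, g2ϖ₁]
  have f₂ : g2ϖ₁ + g2Act (swap 0 1, false) g2ϖ₁ = g2Act (swap 0 2, true) g2ϖ₁ := by
    ext j; fin_cases j <;> simp [g2Act, g2ϖ₁, swap_apply_def]
  have f₃ : g2ϖ₁ + g2Act (swap 0 2, false) g2ϖ₁ = g2Act (swap 0 1, true) g2ϖ₁ := by
    ext j; fin_cases j <;> simp [g2Act, g2ϖ₁, swap_apply_def]
  have f₄ : g2ϖ₁ + g2Act (swap 1 2, false) g2ϖ₁ = (2 : ℝ) • g2ϖ₁ := by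
    ext j; fin_cases j <;> simp [g2Act, g2ϖ₁, swap_apply_def] <;> norm_num
  have f₅ : g2ϖ₁ + g2Act (swap 0 1 * swap 1 2, false) g2ϖ₁ = g2Act (swap 1 2, false) g2ϖ₂ := by
    ext j; fin_cases j <;> simp [g2Act, g2ϖ₁, g2ϖ₂, swap_apply_def]
    norm_num
  have f₆ : g2ϖ₁ + g2Act (swap 1 2 * swap 0 1, false) g2ϖ₁ = g2ϖ₂ := by
    ext j; fin_cases j <;> simp [g2Act, g2ϖ₁, g2ϖ₂, swap_apply_def]
    norm_num
  rw [g2Gencos_eq_genCos, genCos_mul_genCos isLinearOrbitAction_g2Act, Fintype.sum_prod_type]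
  simp only [Fintype.sum_bool]
  rw [Perm.sum_fin_three, e₁, e₂, e₃, e₄, e₅, e₆, f₁, f₂, f₃, f₄, f₅, f₆]
  simp only [genCos_act_left isLinearOrbitAction_g2Act, genCos_zero_left isLinearOrbitAction_g2Act]
  simp only [Fintype.card_prod, Fintype.card_perm, Fintype.card_fin, Fintype.card_bool,
    Nat.cast_mul, Nat.cast_ofNat, mul_inv_rev, one_div]
  ring

theorem conj_g2Gencos (v : EV 3) : conj (g2Gencos g2ϖ₁ v) = g2Gencos g2ϖ₁ v := by
  have h : -g2ϖ₁ = g2Act (1, false) g2ϖ₁ := by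
    ext j; simp [g2Act]
  rw [g2Gencos_eq_genCos, conj_genCos isLinearOrbitAction_g2Act, h,
    genCos_act_left isLinearOrbitAction_g2Act]

theorem g2Expr_eq_g2Expr_one (r : ℕ) (u : EV 3) : g2Expr r u = g2Expr 1 ((r : ℝ) • u) := by
  simp only [g2Expr, g2Gencos_eq_genCos, ← genCos_smul_left isLinearOrbitAction_g2Act, smul_smul,
    Nat.cast_one, mul_one, one_smul, mul_comm (r : ℝ) 2]

theorem g2Expr_one (v : EV 3) :
    g2Expr 1 v =
      ((2 * (g2Gencos g2ϖ₁ v).re ^ 2 - (2 / 3) * (g2Gencos g2ϖ₁ v).re - 1 / 3 : ℝ) : ℂ) := by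
  have h := g2Gencos_mul_self v
  simp only [g2Expr, Nat.cast_one, mul_one, one_smul]
  push_cast
  rw [Complex.conj_eq_iff_re.mp (conj_g2Gencos v)]
  linear_combination -2 * h

theorem g2Gencos_line (t : ℝ) :
    g2Gencos g2ϖ₁ (WithLp.toLp 2 ![0, 0, t]) =
      (((1 + 2 * Real.cos (2 * Real.pi * t)) / 3 : ℝ) : ℂ) := by
  unfold g2Gencos
  rw [Fintype.sum_prod_type]
  simp only [Fintype.sum_bool]
  rw [Perm.sum_fin_three]
  simp [g2Act, g2ϖ₁, PiLp.inner_apply, Fin.sum_univ_three, swap_apply_of_ne_of_ne,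
    Fintype.card_perm]
  have h := Complex.two_cos (2 * Real.pi * t)
  ring_nf at h ⊢
  linear_combination -h / 3

end G₂

/-- For `A₂` and `G₂` (both with hexagonal coroot lattice), the optimal
discrete spectral measure supported on the vertices and edge-midpoints of the rescaled
hexagonal Voronoi cell reduces to the univariate quadratic `2z₁² − (2/3)z₁ − 1/3`, whose
minimum over the Chebyshev image is `F(2r) = −7/18` for every `r ≥ 1`; hence the spectral
lower bound `1 − 1/F(2r) = 25/7` for `χ_m(ℝ², ∂Vor(Λ))`, independent of `r`. -/
theorem statement19 (r : ℕ) (hr : 0 < r) :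
    -- `A₂`: reduction to the quadratic `2z₁² − (2/3)z₁ − 1/3` with `z₁ = Re Θ_{ϖ₁}(ru)`:
    (∀ u : EV 3, a2Expr r u =
      ((2 * ((a2Gencos a2ϖ₁ ((r : ℝ) • u)).re) ^ 2
        - (2 / 3) * (a2Gencos a2ϖ₁ ((r : ℝ) • u)).re - 1 / 3 : ℝ) : ℂ)) ∧
    -- `G₂`: the same reduction with `z₁ = Θ_{ϖ₁}(ru)`:
    (∀ u : EV 3, g2Expr r u =
      ((2 * ((g2Gencos g2ϖ₁ ((r : ℝ) • u)).re) ^ 2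
        - (2 / 3) * (g2Gencos g2ϖ₁ ((r : ℝ) • u)).re - 1 / 3 : ℝ) : ℂ)) ∧
    -- `F(2r) = −7/18` in both cases:
    IsLeast { x : ℝ | ∃ u : EV 3, a2Expr r u = (x : ℂ) } (-(7 / 18)) ∧
    IsLeast { x : ℝ | ∃ u : EV 3, g2Expr r u = (x : ℂ) } (-(7 / 18)) ∧
    -- hence the spectral lower bound `1 − 1/F(2r) = 25/7`:
    (1 - 1 / (-(7 / 18) : ℝ) = 25 / 7) := by
  have hr₀ : (r : ℝ) ≠ 0 := Nat.cast_ne_zero.mpr hr.ne'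
  obtain ⟨t, ht⟩ := exists_cos_two_pi_mul_eq_neg_one_fourth
  have hcos : (1 + 2 * Real.cos (2 * Real.pi * t)) / 3 = 1 / 6 := by rw [ht]; norm_num
  have hA (u : EV 3) := (a2Expr_eq_a2Expr_one r u).trans (a2Expr_one _)
  have hG (u : EV 3) := (g2Expr_eq_g2Expr_one r u).trans (g2Expr_one _)
  refine ⟨hA, hG, isLeast_quadratic_image _ _ hA ⟨(r : ℝ)⁻¹ • WithLp.toLp 2 ![t, -t, 0], ?_⟩,
    isLeast_quadratic_image _ _ hG ⟨(r : ℝ)⁻¹ • WithLp.toLp 2 ![0, 0, t], ?_⟩, by norm_num⟩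
  · rw [smul_inv_smul₀ hr₀, a2Gencos_line, Complex.ofReal_re, hcos]
  · rw [smul_inv_smul₀ hr₀, g2Gencos_line, Complex.ofReal_re, hcos]
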